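/- The final state of the which-path-detector circuit satisfies the closed-form product formula: P_{n+1}·B_{n+1}·(P_n·C_n·B_n) ⋯ (P_1·C_1·B_1) applied to |0⟩ ⊗ |D_n⟩ ⊗ ⋯ ⊗ |D_1⟩ equals Σ over all bit tuples (j₁, …, j_{n+1}) ∈ {0,1}^{n+1} of K_{j₁}·(Π_{k=1}^{n} χ_{k+1, j_k, j_{k+1}}) · |j_{n+1}⟩ ⊗ (U_{n,j_n}|D_n⟩) ⊗ ⋯ ⊗ (U_{1,j_1}|D_1⟩). -/

import Mathlib

open Complex Matrix

/-- The beam-splitter matrix `B_k = [[cos θ, i sin θ],[i sin θ, cos θ]]`. -/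
noncomputable def bsMat (θ : ℝ) : Matrix (Fin 2) (Fin 2) ℂ :=
  !![(Real.cos θ : ℂ), I * Real.sin θ; I * Real.sin θ, (Real.cos θ : ℂ)]

/-- The phase-shift matrix `P_k = diag(e^{iφ₀}, e^{iφ₁})`. -/
noncomputable def psMat (φ₀ φ₁ : ℝ) : Matrix (Fin 2) (Fin 2) ℂ :=
  !![Complex.exp (I * φ₀), 0; 0, Complex.exp (I * φ₁)]

/-- A single-qubit gate `A` acting on the photon factor of `ℂ² ⊗ (ℂ²)^{⊗n}` (the state
space is indexed by pairs `(photon index, detector indices)`). -/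
noncomputable def photonOp (n : ℕ) (A : Matrix (Fin 2) (Fin 2) ℂ) :
    Matrix (Fin 2 × (Fin n → Fin 2)) (Fin 2 × (Fin n → Fin 2)) ℂ :=
  fun p q => if p.2 = q.2 then A p.1 q.1 else 0

/-- The controlled gate `C_k = |0⟩⟨0| ⊗ U 0 + |1⟩⟨1| ⊗ U 1` acting on the photon factor
and the `k`-th detector factor (identity elsewhere). -/
noncomputable def ctrlOp (n : ℕ) (k : Fin n) (U : Fin 2 → Matrix (Fin 2) (Fin 2) ℂ) :
    Matrix (Fin 2 × (Fin n → Fin 2)) (Fin 2 × (Fin n → Fin 2)) ℂ :=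
  fun p q => if p.1 = q.1 ∧ ∀ l, l ≠ k → p.2 l = q.2 l
    then U p.1 (p.2 k) (q.2 k) else 0

/-- The `k`-th step `P_k · C_k · B_k` of the which-path-detector circuit (detector `k+1`
in 1-based numbering corresponds to `k : Fin n`). -/
noncomputable def wpdStep (n : ℕ) (θ : ℕ → ℝ) (φ : ℕ → Fin 2 → ℝ)
    (U : ℕ → Fin 2 → Matrix (Fin 2) (Fin 2) ℂ) (k : Fin n) :
    Matrix (Fin 2 × (Fin n → Fin 2)) (Fin 2 × (Fin n → Fin 2)) ℂ :=
  photonOp n (psMat (φ ((k : ℕ) + 1) 0) (φ ((k : ℕ) + 1) 1)) *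
    ctrlOp n k (U ((k : ℕ) + 1)) * photonOp n (bsMat (θ ((k : ℕ) + 1)))

/-- The ordered product `(P_k C_k B_k) ⋯ (P_1 C_1 B_1)`. -/
noncomputable def wpdProd (n : ℕ) (θ : ℕ → ℝ) (φ : ℕ → Fin 2 → ℝ)
    (U : ℕ → Fin 2 → Matrix (Fin 2) (Fin 2) ℂ) :
    ℕ → Matrix (Fin 2 × (Fin n → Fin 2)) (Fin 2 × (Fin n → Fin 2)) ℂ
  | 0 => 1
  | k + 1 => (if h : k < n then wpdStep n θ φ U ⟨k, h⟩ else 1) * wpdProd n θ φ U k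

/-- `c̃_{k,j} = cos θ_k · e^{iφ_{k,j}}`. -/
noncomputable def ctil (θ : ℕ → ℝ) (φ : ℕ → Fin 2 → ℝ) (k : ℕ) (j : Fin 2) : ℂ :=
  (Real.cos (θ k) : ℂ) * Complex.exp (I * φ k j)

/-- `s̃_{k,j} = i · sin θ_k · e^{iφ_{k,j}}`. -/
noncomputable def stil (θ : ℕ → ℝ) (φ : ℕ → Fin 2 → ℝ) (k : ℕ) (j : Fin 2) : ℂ :=
  I * Real.sin (θ k) * Complex.exp (I * φ k j)

/-- `χ_{k,a,b} = c̃_{k,b}` if `a = b` and `s̃_{k,b}` if `a ≠ b`. -/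
noncomputable def chi (θ : ℕ → ℝ) (φ : ℕ → Fin 2 → ℝ) (k : ℕ) (a b : Fin 2) : ℂ :=
  if a = b then ctil θ φ k b else stil θ φ k b

/-!
Each layer `P_k C_k B_k` sends a product state `|j⟩ ⊗ f` to `∑_b χ_{k,j,b} |b⟩ ⊗ f'`, where
`f'` is `f` with the `k`-th detector replaced by `U_{k,b} f_k`; the last layer `P_{n+1} B_{n+1}`
does the same without touching the detectors. Iterating, the output is a sum over photon paths
`(j₀, j₁, …, j_{n+1})` with `j₀ = 0`, of amplitude `∏_k χ_{k,j_{k-1},j_k}`, and the first factor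
is `χ_{1,0,j₁} = K_{j₁}`.
-/

section BigOperators

variable {ι β M : Type*} [Fintype ι] [DecidableEq ι]

lemma sum_ite_eq_off_eq_sum_update [Fintype β] [AddCommMonoid M] (k : ι) (g : ι → β)
    [DecidablePred fun g' : ι → β => ∀ l, l ≠ k → g l = g' l] (X : (ι → β) → M) :
    ∑ g' : ι → β, (if ∀ l, l ≠ k → g l = g' l then X g' else 0) =
      ∑ c, X (Function.update g k c) := by
  classical
  have h (g' : ι → β) : (if ∀ l, l ≠ k → g l = g' l then X g' else 0) =
      ∑ c, if Function.update g k c = g' then X g' else 0 := by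
    by_cases hg : ∀ l, l ≠ k → g l = g' l
    · simp only [if_pos hg, Function.update_eq_iff, and_iff_left hg, Finset.sum_ite_eq',
        Finset.mem_univ, if_true]
    · rw [if_neg hg]
      exact (Finset.sum_eq_zero fun c _ => if_neg fun h => hg (Function.update_eq_iff.mp h).2).symm
  simp only [h]
  rw [Finset.sum_comm]
  simp

variable [CommMonoid M]

lemma prod_apply_update (f : ι → β → M) (k : ι) (g : ι → β) (c : β) :
    ∏ l, f l (Function.update g k c l) = f k c * ∏ l ∈ {k}ᶜ, f l (g l) := by
  rw [Fintype.prod_eq_mul_prod_compl k, Function.update_self]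
  congr 1
  refine Finset.prod_congr rfl fun l hl => ?_
  rw [Function.update_of_ne (by simpa using hl)]

lemma prod_update_apply (f : ι → β → M) (k : ι) (w : β → M) (g : ι → β) :
    ∏ l, Function.update f k w l (g l) = w (g k) * ∏ l ∈ {k}ᶜ, f l (g l) := by
  rw [Fintype.prod_eq_mul_prod_compl k, Function.update_self]
  congr 1
  refine Finset.prod_congr rfl fun l hl => ?_
  rw [Function.update_of_ne (by simpa using hl)]

end BigOperators

lemma sum_fin_succ_pi_eq_sum_snoc {α M : Type*} [Fintype α] [AddCommMonoid M] {t : ℕ}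
    (F : (Fin (t + 1) → α) → M) :
    ∑ J, F J = ∑ J : Fin t → α, ∑ b, F (Fin.snoc J b) := by
  rw [← (Fin.snocEquiv fun _ => α).sum_comp, Fintype.sum_prod_type, Finset.sum_comm]
  rfl

noncomputable def prodState (n : ℕ) (j : Fin 2) (f : Fin n → Fin 2 → ℂ) :
    Fin 2 × (Fin n → Fin 2) → ℂ :=
  fun p => (if p.1 = j then 1 else 0) * ∏ k, f k (p.2 k)

section ProductState

variable {n : ℕ}

lemma photonOp_mulVec_prodState (A : Matrix (Fin 2) (Fin 2) ℂ) (j : Fin 2)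
    (f : Fin n → Fin 2 → ℂ) :
    photonOp n A *ᵥ prodState n j f = ∑ b, A b j • prodState n b f := by
  ext ⟨a, g⟩
  simp [mulVec, dotProduct, photonOp, prodState, Fintype.sum_prod_type, Finset.sum_apply]

lemma photonOp_psMat_mulVec_prodState (φ₀ φ₁ : ℝ) (j : Fin 2) (f : Fin n → Fin 2 → ℂ) :
    photonOp n (psMat φ₀ φ₁) *ᵥ prodState n j f = psMat φ₀ φ₁ j j • prodState n j f := by
  rw [photonOp_mulVec_prodState, Fin.sum_univ_two]
  fin_cases j <;> simp [psMat]

lemma ctrlOp_mulVec_prodState (k : Fin n) (V : Fin 2 → Matrix (Fin 2) (Fin 2) ℂ)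
    (j : Fin 2) (f : Fin n → Fin 2 → ℂ) :
    ctrlOp n k V *ᵥ prodState n j f = prodState n j (Function.update f k (V j *ᵥ f k)) := by
  ext ⟨a, g⟩
  simp only [mulVec, dotProduct, ctrlOp, prodState, Fintype.sum_prod_type, ite_and, ite_mul,
    zero_mul]
  rw [Finset.sum_comm]
  simp only [Finset.sum_ite_eq, Finset.mem_univ, if_true]
  rw [sum_ite_eq_off_eq_sum_update]
  split_ifs with ha
  · subst ha
    simp only [Function.update_self, one_mul, prod_apply_update, prod_update_apply, mulVec,
      dotProduct, Finset.sum_mul]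
    exact Finset.sum_congr rfl fun c _ => by ring
  · simp

end ProductState

section Circuit

variable {n : ℕ} (θ : ℕ → ℝ) (φ : ℕ → Fin 2 → ℝ) (U : ℕ → Fin 2 → Matrix (Fin 2) (Fin 2) ℂ)

lemma chi_eq_psMat_mul_bsMat (m : ℕ) (a b : Fin 2) :
    chi θ φ m a b = psMat (φ m 0) (φ m 1) b b * bsMat (θ m) b a := by
  fin_cases a <;> fin_cases b <;> simp [chi, ctil, stil, psMat, bsMat] <;> ring

lemma photonOp_psMat_mul_bsMat_mulVec_prodState (m : ℕ) (j : Fin 2) (f : Fin n → Fin 2 → ℂ) :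
    (photonOp n (psMat (φ m 0) (φ m 1)) * photonOp n (bsMat (θ m))) *ᵥ prodState n j f =
      ∑ b, chi θ φ m j b • prodState n b f := by
  rw [← mulVec_mulVec, photonOp_mulVec_prodState, mulVec_sum]
  refine Finset.sum_congr rfl fun b _ => ?_
  rw [mulVec_smul, photonOp_psMat_mulVec_prodState, smul_smul, chi_eq_psMat_mul_bsMat, mul_comm]

lemma wpdStep_mulVec_prodState (k : Fin n) (j : Fin 2) (f : Fin n → Fin 2 → ℂ) :
    wpdStep n θ φ U k *ᵥ prodState n j f =
      ∑ b, chi θ φ (k + 1) j b • prodState n b (Function.update f k (U (k + 1) b *ᵥ f k)) := by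
  rw [wpdStep, ← mulVec_mulVec, ← mulVec_mulVec, photonOp_mulVec_prodState, mulVec_sum,
    mulVec_sum]
  refine Finset.sum_congr rfl fun b _ => ?_
  rw [mulVec_smul, mulVec_smul, ctrlOp_mulVec_prodState, photonOp_psMat_mulVec_prodState,
    smul_smul, chi_eq_psMat_mul_bsMat, mul_comm]

/-- `J k` is the photon's basis state after the first `k` layers, `J 0` the input. -/
noncomputable def pathAmp (t : ℕ) (J : Fin (t + 1) → Fin 2) : ℂ :=
  ∏ k : Fin t, chi θ φ (k + 1) (J k.castSucc) (J k.succ)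

lemma pathAmp_snoc (t : ℕ) (J : Fin (t + 1) → Fin 2) (b : Fin 2) :
    pathAmp θ φ (t + 1) (Fin.snoc J b) =
      pathAmp θ φ t J * chi θ φ (t + 1) (J (Fin.last t)) b := by
  simp [pathAmp, Fin.prod_univ_castSucc, -Fin.castSucc_succ, Fin.succ_castSucc]

lemma pathAmp_cons (t : ℕ) (a : Fin 2) (J : Fin (t + 1) → Fin 2) :
    pathAmp θ φ (t + 1) (Fin.cons a J) =
      chi θ φ 1 a (J 0) * ∏ k : Fin t, chi θ φ (k + 2) (J k.castSucc) (J k.succ) := by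
  simp [pathAmp, Fin.prod_univ_succ, add_assoc, one_add_one_eq_two]

/-- After `t` layers along the photon path `J = (j₁, …, j_t)`, detector `k` (0-based) has been
acted on, by `U_{k+1, j_{k+1}}`, iff `k < t`. -/
noncomputable def detectorState (D : Fin n → Fin 2 → ℂ) (t : ℕ) (J : Fin t → Fin 2) :
    Fin n → Fin 2 → ℂ :=
  fun k => if h : (k : ℕ) < t then U (k + 1) (J ⟨k, h⟩) *ᵥ D k else D k

lemma update_detectorState (D : Fin n → Fin 2 → ℂ) (t : ℕ) (ht : t < n) (J : Fin t → Fin 2)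
    (b : Fin 2) :
    Function.update (detectorState U D t J) ⟨t, ht⟩ (U (t + 1) b *ᵥ D ⟨t, ht⟩) =
      detectorState U D (t + 1) (Fin.snoc J b) := by
  ext k : 1
  rcases lt_trichotomy (k : ℕ) t with hk | hk | hk
  · have hne : k ≠ ⟨t, ht⟩ := Fin.ne_of_val_ne hk.ne
    simp [detectorState, Fin.snoc, hk, hne, Nat.lt_succ_of_lt hk]
  · obtain rfl : k = ⟨t, ht⟩ := Fin.ext hk
    simp [detectorState, Fin.snoc]
  · have hne : k ≠ ⟨t, ht⟩ := Fin.ne_of_val_ne hk.ne'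
    rw [Function.update_of_ne hne]
    simp only [detectorState, dif_neg hk.not_gt, dif_neg (by omega : ¬(k : ℕ) < t + 1)]

lemma wpdProd_mulVec_prodState (j₀ : Fin 2) (D : Fin n → Fin 2 → ℂ) (t : ℕ) (ht : t ≤ n) :
    wpdProd n θ φ U t *ᵥ prodState n j₀ D =
      ∑ J : Fin t → Fin 2, pathAmp θ φ t (Fin.cons j₀ J) •
        prodState n ((Fin.cons j₀ J : Fin (t + 1) → Fin 2) (Fin.last t))
          (detectorState U D t J) := by
  induction t with
  | zero =>
    have hdet (J : Fin 0 → Fin 2) : detectorState U D 0 J = D :=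
      funext fun k => dif_neg k.val.not_lt_zero
    simp [wpdProd, pathAmp, hdet]
  | succ t ih =>
    have ht' : t < n := ht
    rw [wpdProd, dif_pos ht', ← mulVec_mulVec, ih ht'.le, mulVec_sum,
      sum_fin_succ_pi_eq_sum_snoc]
    refine Finset.sum_congr rfl fun J _ => ?_
    have hdet : detectorState U D t J ⟨t, ht'⟩ = D ⟨t, ht'⟩ := dif_neg (lt_irrefl t)
    rw [mulVec_smul, wpdStep_mulVec_prodState, Finset.smul_sum]
    refine Finset.sum_congr rfl fun b _ => ?_
    rw [smul_smul, Fin.cons_snoc_eq_snoc_cons, pathAmp_snoc, Fin.snoc_last, hdet,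
      update_detectorState]

end Circuit

theorem stmt14_general (n : ℕ) (θ : ℕ → ℝ) (φ : ℕ → Fin 2 → ℝ)
    (U : ℕ → Fin 2 → Matrix (Fin 2) (Fin 2) ℂ)
    (D : Fin n → Fin 2 → ℂ) :
    let Kcoef : Fin 2 → ℂ := fun j => if j = 0 then ctil θ φ 1 0 else stil θ φ 1 1
    let ψ₀ : Fin 2 × (Fin n → Fin 2) → ℂ :=
      fun p => (if p.1 = 0 then 1 else 0) * ∏ k, D k (p.2 k)
    (photonOp n (psMat (φ (n + 1) 0) (φ (n + 1) 1)) * photonOp n (bsMat (θ (n + 1))) *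
        wpdProd n θ φ U n) *ᵥ ψ₀ =
      ∑ jt : Fin (n + 1) → Fin 2,
        (Kcoef (jt 0) * ∏ k : Fin n, chi θ φ ((k : ℕ) + 2) (jt k.castSucc) (jt k.succ)) •
          (fun p : Fin 2 × (Fin n → Fin 2) =>
            (if p.1 = jt (Fin.last n) then 1 else 0) *
              ∏ k : Fin n, (U ((k : ℕ) + 1) (jt k.castSucc) *ᵥ D k) (p.2 k)) := by
  intro Kcoef ψ₀
  have hK (b : Fin 2) : Kcoef b = chi θ φ 1 0 b := by fin_cases b <;> rfl
  have hdet (J : Fin n → Fin 2) :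
      detectorState U D n J = fun k : Fin n => U (k + 1) (J k) *ᵥ D k :=
    funext fun k => dif_pos k.isLt
  change _ *ᵥ prodState n 0 D = _
  rw [← mulVec_mulVec, wpdProd_mulVec_prodState θ φ U 0 D n le_rfl, mulVec_sum,
    sum_fin_succ_pi_eq_sum_snoc]
  refine Finset.sum_congr rfl fun J _ => ?_
  rw [mulVec_smul, photonOp_psMat_mul_bsMat_mulVec_prodState, Finset.smul_sum]
  refine Finset.sum_congr rfl fun b _ => ?_
  rw [smul_smul, ← pathAmp_snoc, ← Fin.cons_snoc_eq_snoc_cons, pathAmp_cons, hK, hdet]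
  change _ = _ • prodState n _ _
  simp only [Fin.snoc_last, Fin.snoc_castSucc]

/-- The final state of the which-path-detector circuit satisfies the
closed-form product formula: `P_{n+1}·B_{n+1}·(P_n C_n B_n) ⋯ (P_1 C_1 B_1)` applied to
`|0⟩ ⊗ |D_n⟩ ⊗ ⋯ ⊗ |D_1⟩` equals the sum over bit tuples `(j₁, …, j_{n+1}) ∈ {0,1}^{n+1}`
(here `jt : Fin (n+1) → Fin 2`, with `jt (k−1) = j_k`) of
`K_{j₁} · (Π_{k=1}^{n} χ_{k+1, j_k, j_{k+1}}) · |j_{n+1}⟩ ⊗ (U_{n,j_n}|D_n⟩) ⊗ ⋯ ⊗ (U_{1,j_1}|D_1⟩)`,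
where `K₀ = c̃_{1,0}` and `K₁ = s̃_{1,1}`. -/
theorem stmt14 (n : ℕ) (hn : 1 ≤ n) (θ : ℕ → ℝ) (φ : ℕ → Fin 2 → ℝ)
    (U : ℕ → Fin 2 → Matrix (Fin 2) (Fin 2) ℂ)
    (hU : ∀ k j, U k j ∈ Matrix.unitaryGroup (Fin 2) ℂ)
    (D : Fin n → Fin 2 → ℂ)
    (hD : ∀ k, ‖D k 0‖ ^ 2 + ‖D k 1‖ ^ 2 = 1) :
    let Kcoef : Fin 2 → ℂ := fun j => if j = 0 then ctil θ φ 1 0 else stil θ φ 1 1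
    let ψ₀ : Fin 2 × (Fin n → Fin 2) → ℂ :=
      fun p => (if p.1 = 0 then 1 else 0) * ∏ k, D k (p.2 k)
    (photonOp n (psMat (φ (n + 1) 0) (φ (n + 1) 1)) * photonOp n (bsMat (θ (n + 1))) *
        wpdProd n θ φ U n) *ᵥ ψ₀ =
      ∑ jt : Fin (n + 1) → Fin 2,
        (Kcoef (jt 0) * ∏ k : Fin n, chi θ φ ((k : ℕ) + 2) (jt k.castSucc) (jt k.succ)) •
          (fun p : Fin 2 × (Fin n → Fin 2) =>
            (if p.1 = jt (Fin.last n) then 1 else 0) *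
              ∏ k : Fin n, (U ((k : ℕ) + 1) (jt k.castSucc) *ᵥ D k) (p.2 k)) :=
  stmt14_general n θ φ U D
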